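/- arXiv:math/0209349 — 3 statements merged into one kernel-verified Lean document; each statement's English description precedes it below -/
import Mathlib

section
/- Let φ(λ₁,…,λₙ) be a symmetric C² function inducing Φ on symmetric matrices via eigenvalues. At a diagonal matrix with distinct eigenvalues λᵢ, for any symmetric matrix Ż: Σ_{i,j,m,n} (∂²Φ/∂z_{ij}∂z_{mn}) Ż_{ij} Ż_{mn} = Σ_{k,l} (∂²φ/∂λₖ∂λₗ) Żₖₖ Żₗₗ + Σ_{k≠l} ((∂φ/∂λₖ − ∂φ/∂λₗ)/(λₖ − λₗ)) Ż_{kl}². -/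
/-!
Near a matrix with simple spectrum `l`, the roots of the characteristic polynomial are analytic
functions of the entries: apply the implicit function theorem to `(Z, x) ↦ (χ_Z (x k))ₖ`, whose
`x`-derivative is diagonal with entries `χ'(l k) = ∏_{j ≠ k} (l k - l j) ≠ 0`.

Along the line `t ↦ diagonal l + t • B` the eigenvalue `ν k` is a root of
`det (x - diagonal l - t • B) = ∏ i, (x - l i - t B i i) + t² R(t, x)`. Splitting off the factor
`i = k` gives `ν k t = l k + t B k k + t² w t` with `w 0 = -R(0, l k) / ∏_{j ≠ k} (l k - l j)`, and
only the transpositions `(k m)` contribute to `R(0, l k)`. Hence `(ν k)' 0 = B k k` and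
`(ν k)'' 0 = 2 ∑_{m ≠ k} B k m B m k / (l k - l m)`. As `Φ (diagonal l + t • Ż) = φ (ν t)` near
`t = 0`, the second-order chain rule gives the formula, once the first-order term is symmetrized
in `k` and `m`.
-/

/-- `Φ` is induced by the symmetric function `φ` via the eigenvalues:
`Φ Z = φ μ` whenever `Z` is symmetric with eigenvalues `μ` (counted with
multiplicity, i.e. the characteristic polynomial of `Z` is `∏ (X - μᵢ)`). -/
def InducedByEigenvalues (n : ℕ) (φ : (Fin n → ℝ) → ℝ)
    (Φ : (Fin n → Fin n → ℝ) → ℝ) : Prop :=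
  ∀ (Z : Fin n → Fin n → ℝ) (μ : Fin n → ℝ), (Matrix.of Z).IsSymm →
    (Matrix.of Z).charpoly = ∏ i, (Polynomial.X - Polynomial.C (μ i)) →
    Φ Z = φ μ

open Polynomial Filter Topology Finset
open scoped ContDiff

theorem Polynomial.eq_prod_X_sub_C_of_injective {R ι : Type*} [CommRing R] [IsDomain R]
    [Fintype ι] {p : R[X]} (hp : p.Monic) (hdeg : p.natDegree = Fintype.card ι) {μ : ι → R}
    (hμ : Function.Injective μ) (hroot : ∀ i, p.IsRoot (μ i)) :
    p = ∏ i, (X - C (μ i)) := by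
  have hle : univ.val.map μ ≤ p.roots :=
    (Multiset.le_iff_subset (univ.nodup.map hμ)).2 fun a ha => by
      obtain ⟨i, -, rfl⟩ := Multiset.mem_map.1 ha
      exact (mem_roots hp.ne_zero).2 (hroot i)
  have hroots : univ.val.map μ = p.roots :=
    Multiset.eq_of_le_of_card_le hle (by simpa [hdeg] using p.card_roots')
  rw [← prod_multiset_X_sub_C_of_monic_of_roots_card_eq hp (by rw [← hroots]; simp [hdeg]),
    ← hroots, Multiset.map_map]
  rfl

theorem ContinuousAt.eventually_injective {X ι Y : Type*} [TopologicalSpace X] [Finite ι]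
    [TopologicalSpace Y] [T2Space Y] {g : X → ι → Y} {a : X} (hg : ContinuousAt g a)
    (ha : Function.Injective (g a)) : ∀ᶠ x in 𝓝 a, Function.Injective (g x) := by
  have hne : ∀ k m, ∀ᶠ x in 𝓝 a, g x k = g x m → k = m := fun k m => by
    by_cases hkm : k = m
    · exact .of_forall fun _ _ => hkm
    · filter_upwards [(((continuous_apply k).continuousAt.comp hg).ne_iff_eventually_ne
        ((continuous_apply m).continuousAt.comp hg)).1 (ha.ne hkm)] with x hx h
      exact absurd h hx
  filter_upwards [eventually_all.2 fun k => eventually_all.2 (hne k)] with x hx k m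
  exact hx k m

theorem ContinuousLinearMap.isInvertible_pi_smul_proj {𝕜 ι : Type*} [Field 𝕜]
    [TopologicalSpace 𝕜] [IsTopologicalRing 𝕜] [Fintype ι] {c : ι → 𝕜} (hc : ∀ k, c k ≠ 0) :
    (ContinuousLinearMap.pi fun k => c k • proj (R := 𝕜) (φ := fun _ => 𝕜) k).IsInvertible :=
  .of_inverse (g := .pi fun k => (c k)⁻¹ • proj (R := 𝕜) (φ := fun _ => 𝕜) k)
    (by ext; simp [hc]) (by ext; simp [hc])

theorem exists_contDiffAt_eigenvalues {𝕜 ι : Type*} [RCLike 𝕜] [Fintype ι] [DecidableEq ι]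
    {A : ι → ι → 𝕜} {l : ι → 𝕜} (hl : Function.Injective l)
    (hA : (Matrix.of A).charpoly = ∏ i, (X - C (l i))) :
    ∃ μ : (ι → ι → 𝕜) → ι → 𝕜, ContDiffAt 𝕜 ω μ A ∧ μ A = l ∧
      ∀ᶠ Z in 𝓝 A, (Matrix.of Z).charpoly = ∏ i, (X - C (μ Z i)) := by
  set f : (ι → ι → 𝕜) × (ι → 𝕜) → ι → 𝕜 := fun p k => (Matrix.of p.1).charpoly.eval (p.2 k)
  have hf : ContDiff 𝕜 ω f := by
    simp only [f, Matrix.eval_charpoly, Matrix.scalar_apply, ← Matrix.smul_one_eq_diagonal,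
      Matrix.det_apply', Matrix.sub_apply, Matrix.smul_apply, Matrix.of_apply, smul_eq_mul]
    fun_prop
  set c : ι → 𝕜 := fun k => ∏ j ∈ univ.erase k, (l k - l j)
  have hc : ∀ k, c k ≠ 0 := fun k => prod_ne_zero_iff.2 fun j hj =>
    sub_ne_zero.2 <| hl.ne (ne_of_mem_erase hj).symm
  have hfA : HasFDerivAt (fun x => f (A, x))
      (.pi fun k => c k • ContinuousLinearMap.proj (R := 𝕜) (φ := fun _ => 𝕜) k) l := by
    refine hasFDerivAt_pi.2 fun k => ?_
    have hck : (derivative (Matrix.of A).charpoly).eval (l k) = c k := by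
      rw [hA, ← Lagrange.nodal, Lagrange.eval_nodal_derivative_eval_node_eq (mem_univ k),
        Lagrange.eval_nodal]
    have := ((Matrix.of A).charpoly.hasDerivAt (l k)).comp_hasFDerivAt l
      (hasFDerivAt_apply (𝕜 := 𝕜) (F' := fun _ => 𝕜) k l)
    rwa [hck] at this
  have hinv : (fderiv 𝕜 f (A, l) ∘L .inr 𝕜 _ _).IsInvertible := by
    rw [(((hf.differentiable (by simp)) _).hasFDerivAt.comp l
      (hasFDerivAt_prodMk_right A l)).unique hfA]
    exact ContinuousLinearMap.isInvertible_pi_smul_proj hc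
  set μ := hf.contDiffAt.implicitFunction (u := (A, l)) (by simp) hinv
  have hμA : μ A = l := hf.contDiffAt.implicitFunction_apply_self _ hinv
  have hμ : ContDiffAt 𝕜 ω μ A := hf.contDiffAt.contDiffAt_implicitFunction _ hinv
  refine ⟨μ, hμ, hμA, ?_⟩
  filter_upwards [hf.contDiffAt.eventually_apply_implicitFunction _ hinv,
    hμ.continuousAt.eventually_injective (hμA ▸ hl)] with Z hZ hZinj
  refine eq_prod_X_sub_C_of_injective (Matrix.charpoly_monic _)
    (Matrix.charpoly_natDegree_eq_dim _) hZinj fun k => ?_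
  have := congrFun hZ k
  simp only [f, hA, eval_prod] at this
  exact this.trans (prod_eq_zero (mem_univ k) (by simp))

namespace Matrix

open Equiv

variable {R ι : Type*} [CommRing R] [Fintype ι] [DecidableEq ι]

/-- A permutation `σ ≠ 1` moves at least two indices, and each moved index contributes a factor
`t` to the term of `σ` in `det (diagonal d - t • B)`; this collects those terms divided by `t²`. -/
def detDiagonalSubSmulRemainder (d : ι → R) (B : Matrix ι ι R) (t : R) : R :=
  ∑ σ ∈ univ.erase (1 : Perm ι), ((Perm.sign σ : ℤ) : R) *
    (t ^ (#σ.support - 2) * ((∏ i ∈ σ.supportᶜ, (d i - t * B i i)) * ∏ i ∈ σ.support, -B (σ i) i))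

theorem det_diagonal_sub_smul (d : ι → R) (B : Matrix ι ι R) (t : R) :
    det (diagonal d - t • B) =
      ∏ i, (d i - t * B i i) + t ^ 2 * detDiagonalSubSmulRemainder d B t := by
  rw [det_apply', ← add_sum_erase _ _ (mem_univ 1), detDiagonalSubSmulRemainder, mul_sum]
  congr 1
  · simp
  refine sum_congr rfl fun σ hσ => ?_
  have hcard : 2 ≤ #σ.support := Perm.two_le_card_support_of_ne_one (ne_of_mem_erase hσ)
  rw [← prod_mul_prod_compl σ.support, mul_comm (∏ i ∈ σ.support, _)]
  have hfix : ∀ i ∈ σ.supportᶜ, (diagonal d - t • B) (σ i) i = d i - t * B i i := fun i hi => by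
    rw [Perm.notMem_support.1 (mem_compl.1 hi)]
    simp
  have hmove : ∀ i ∈ σ.support, (diagonal d - t • B) (σ i) i = t * -B (σ i) i := fun i hi => by
    simp [diagonal_apply_ne _ (Perm.mem_support.1 hi)]
  rw [prod_congr rfl hfix, prod_congr rfl hmove, prod_mul_distrib, prod_const,
    ← Nat.add_sub_cancel' hcard, pow_add, Nat.add_sub_cancel_left]
  ring

theorem detDiagonalSubSmulRemainder_zero (d : ι → R) (B : Matrix ι ι R) {k : ι} (hk : d k = 0) :
    detDiagonalSubSmulRemainder d B 0 =
      -∑ m ∈ univ.erase k, B k m * B m k * ∏ j ∈ (univ.erase k).erase m, d j := by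
  have hswap : ∀ m ∈ univ.erase k, k ≠ m := fun m hm => (ne_of_mem_erase hm).symm
  have himage : (univ.erase k).image (Equiv.swap k) ⊆ univ.erase 1 := fun σ hσ => by
    obtain ⟨m, hm, rfl⟩ := mem_image.1 hσ
    simpa using hswap m hm
  have hvanish : ∀ σ ∈ univ.erase (1 : Perm ι), σ ∉ (univ.erase k).image (Equiv.swap k) →
      ((Perm.sign σ : ℤ) : R) * ((0 : R) ^ (#σ.support - 2) *
        ((∏ i ∈ σ.supportᶜ, (d i - 0 * B i i)) * ∏ i ∈ σ.support, -B (σ i) i)) = 0 := by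
    intro σ hσ hσk
    have hcard : 2 ≤ #σ.support := Perm.two_le_card_support_of_ne_one (ne_of_mem_erase hσ)
    obtain hcard | hcard := hcard.eq_or_lt
    · obtain ⟨a, b, hab, rfl⟩ := Perm.card_support_eq_two.1 hcard.symm
      have hkfix : Equiv.swap a b k = k := by
        by_contra hkab
        refine hσk (mem_image.2 ⟨Equiv.swap a b k, mem_erase.2 ⟨hkab, mem_univ _⟩, ?_⟩)
        rcases eq_or_ne k a with rfl | hka
        · simp
        rcases eq_or_ne k b with rfl | hkb
        · simp [Equiv.swap_comm]
        · exact absurd (Equiv.swap_apply_of_ne_of_ne hka hkb) hkab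
      rw [prod_eq_zero (mem_compl.2 (Perm.notMem_support.2 hkfix)) (by simp [hk])]
      simp
    · simp [zero_pow (Nat.sub_ne_zero_of_lt hcard)]
  rw [detDiagonalSubSmulRemainder, ← sum_subset himage hvanish,
    sum_image fun m hm m' hm' h => by simpa using congrArg (· k) h, ← sum_neg_distrib]
  refine sum_congr rfl fun m hm => ?_
  have hkm := hswap m hm
  have hcompl : (Equiv.swap k m).supportᶜ = (univ.erase k).erase m := by
    ext i
    simp [Perm.support_swap hkm, and_comm]
  rw [hcompl, Perm.support_swap hkm, Perm.sign_swap hkm, card_pair hkm, prod_pair hkm]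
  simp only [Units.val_neg, Units.val_one, Int.cast_neg, Int.cast_one, tsub_self, pow_zero,
    zero_mul, sub_zero, swap_apply_left, swap_apply_right]
  ring

end Matrix

section Calculus

variable {𝕜 E F : Type*} [NontriviallyNormedField 𝕜] [NormedAddCommGroup E] [NormedSpace 𝕜 E]
  [NormedAddCommGroup F] [NormedSpace 𝕜 F]

theorem ContDiffAt.deriv_deriv_comp {f : E → F} {γ : 𝕜 → E} {t : 𝕜}
    (hf : ContDiffAt 𝕜 2 f (γ t)) (hγ : ContDiffAt 𝕜 2 γ t) :
    deriv (deriv (f ∘ γ)) t =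
      fderiv 𝕜 (fderiv 𝕜 f) (γ t) (deriv γ t) (deriv γ t) +
        fderiv 𝕜 f (γ t) (deriv (deriv γ) t) := by
  have hfγ : ∀ᶠ s in 𝓝 t, DifferentiableAt 𝕜 f (γ s) :=
    hγ.continuousAt.eventually <|
      (hf.eventually (by simp)).mono fun _ h => h.differentiableAt (by simp)
  have hγs : ∀ᶠ s in 𝓝 t, DifferentiableAt 𝕜 γ s :=
    (hγ.eventually (by simp)).mono fun _ h => h.differentiableAt (by simp)
  have hd : deriv (f ∘ γ) =ᶠ[𝓝 t] fun s => fderiv 𝕜 f (γ s) (deriv γ s) := by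
    filter_upwards [hfγ, hγs] with s h1 h2 using fderiv_comp_deriv s h1 h2
  have h1 : HasDerivAt (fun s => fderiv 𝕜 f (γ s)) (fderiv 𝕜 (fderiv 𝕜 f) (γ t) (deriv γ t)) t :=
    ((hf.fderiv_right (m := 1) le_rfl).differentiableAt one_ne_zero).hasFDerivAt.comp_hasDerivAt t
      (hγ.differentiableAt two_ne_zero).hasDerivAt
  have h2 : HasDerivAt (deriv γ) (deriv (deriv γ) t) t :=
    ((hγ.derivWithin (m := 1) le_rfl).differentiableAt one_ne_zero).hasDerivAt
  rw [hd.deriv_eq, (h1.clm_apply h2).deriv]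

theorem ContDiffAt.iteratedFDeriv_two_eq_deriv_deriv {f : E → F} {x : E}
    (hf : ContDiffAt 𝕜 2 f x) (v : E) :
    iteratedFDeriv 𝕜 2 f x ![v, v] = deriv (deriv fun t : 𝕜 => f (x + t • v)) 0 := by
  have hline : deriv (fun t : 𝕜 => x + t • v) = fun _ => v := by
    funext t
    exact (((hasDerivAt_id' t).smul_const v).const_add x).deriv.trans (one_smul _ _)
  have h := ContDiffAt.deriv_deriv_comp (γ := fun t : 𝕜 => x + t • v) (t := 0) (by simpa using hf)
    (by fun_prop)
  simp only [hline, zero_smul, add_zero, deriv_const', map_zero, Function.comp_def] at h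
  simp [iteratedFDeriv_two_apply, h]

theorem deriv_deriv_pi_apply {ι : Type*} [Fintype ι] {ν : 𝕜 → ι → E} {t : 𝕜}
    (hν : ContDiffAt 𝕜 2 ν t) (k : ι) :
    deriv (deriv ν) t k = deriv (deriv fun s => ν s k) t := by
  have h : deriv ν =ᶠ[𝓝 t] fun s k => deriv (fun s => ν s k) s :=
    (hν.eventually (by simp)).mono fun s hs =>
      deriv_pi fun k => (contDiffAt_pi.1 hs k).differentiableAt (by simp)
  rw [h.deriv_eq, deriv_pi fun k =>
    ((contDiffAt_pi.1 hν k).derivWithin (m := 1) le_rfl).differentiableAt one_ne_zero]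

theorem derivs_of_eventuallyEq_add_sq_smul {y w : 𝕜 → E} {a b : E}
    (hw : ContDiffAt 𝕜 2 w 0) (hy : y =ᶠ[𝓝 0] fun t => a + t • b + t ^ 2 • w t) :
    deriv y 0 = b ∧ deriv (deriv y) 0 = (2 : 𝕜) • w 0 := by
  have hd : deriv y =ᶠ[𝓝 0] fun t => b + (2 * t) • w t + t ^ 2 • deriv w t := by
    filter_upwards [hy.deriv, (hw.eventually (by simp))] with t ht hwt
    rw [ht, ((((hasDerivAt_id' t).smul_const b).const_add a).fun_add
      ((hasDerivAt_pow 2 t).fun_smul (hwt.differentiableAt (by simp)).hasDerivAt)).deriv]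
    simp only [one_smul, Nat.cast_ofNat, Nat.add_one_sub_one, pow_one]
    abel
  have h2 : HasDerivAt (fun t : 𝕜 => b + (2 * t) • w t + t ^ 2 • deriv w t) ((2 : 𝕜) • w 0) 0 := by
    have := ((((hasDerivAt_id (0 : 𝕜)).const_mul 2).fun_smul
      (hw.differentiableAt two_ne_zero).hasDerivAt).const_add b).fun_add
      ((hasDerivAt_pow 2 (0 : 𝕜)).fun_smul
        ((hw.derivWithin (m := 1) le_rfl).differentiableAt one_ne_zero).hasDerivAt)
    simpa using this
  exact ⟨by simpa using hd.eq_of_nhds, by rw [hd.deriv_eq, h2.deriv]⟩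

end Calculus

open Matrix in
theorem derivs_of_isRoot_charpoly_diagonal_add_smul {𝕜 ι : Type*} [NontriviallyNormedField 𝕜]
    [Fintype ι] [DecidableEq ι] {l : ι → 𝕜} (hl : Function.Injective l) (B : Matrix ι ι 𝕜) {k : ι}
    {y : 𝕜 → 𝕜} (hy : ContDiffAt 𝕜 2 y 0) (hy0 : y 0 = l k)
    (hroot : ∀ᶠ t in 𝓝 0, (diagonal l + t • B).charpoly.IsRoot (y t)) :
    deriv y 0 = B k k ∧
      deriv (deriv y) 0 = 2 * ∑ m ∈ univ.erase k, B k m * B m k / (l k - l m) := by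
  set P : 𝕜 → 𝕜 := fun t => ∏ i ∈ univ.erase k, (y t - l i - t * B i i)
  set R : 𝕜 → 𝕜 := fun t => detDiagonalSubSmulRemainder (fun i => y t - l i) B t
  have hP0 : P 0 = ∏ j ∈ univ.erase k, (l k - l j) := by simp [P, hy0]
  have hP0ne : P 0 ≠ 0 := hP0 ▸ prod_ne_zero_iff.2 fun j hj =>
    sub_ne_zero.2 <| hl.ne (ne_of_mem_erase hj).symm
  have hP : ContDiffAt 𝕜 2 P 0 := by fun_prop
  have hR : ContDiffAt 𝕜 2 R 0 := by
    simp only [R, detDiagonalSubSmulRemainder]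
    fun_prop
  have hyw : y =ᶠ[𝓝 0] fun t => l k + t • B k k + t ^ 2 • (-R t / P t) := by
    filter_upwards [hroot, hP.continuousAt.eventually_ne hP0ne] with t ht hPt
    have hmat : scalar ι (y t) - (diagonal l + t • B) = diagonal (fun i => y t - l i) - t • B := by
      rw [scalar_apply, ← sub_sub, diagonal_sub]
    rw [IsRoot.def, eval_charpoly, hmat, det_diagonal_sub_smul,
      ← mul_prod_erase _ _ (mem_univ k)] at ht
    simp only [smul_eq_mul]
    field_simp
    linear_combination ht
  obtain ⟨h1, h2⟩ := derivs_of_eventuallyEq_add_sq_smul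
    (w := fun t => -R t / P t) (hR.neg.div hP hP0ne) hyw
  have hR0 :
      R 0 = -∑ m ∈ univ.erase k, B k m * B m k * ∏ j ∈ (univ.erase k).erase m, (l k - l j) := by
    simpa only [R, hy0] using detDiagonalSubSmulRemainder_zero _ B (sub_self (l k))
  refine ⟨h1, h2.trans ?_⟩
  rw [smul_eq_mul, hR0, neg_neg, sum_div]
  congr 1
  refine sum_congr rfl fun m hm => ?_
  rw [hP0, ← mul_prod_erase _ _ hm, mul_comm (l k - l m), ← div_div, mul_div_cancel_right₀]
  rw [hP0, ← mul_prod_erase _ _ hm] at hP0ne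
  exact right_ne_zero_of_mul hP0ne

theorem exists_eigenvalues_diagonal_add_smul {𝕜 ι : Type*} [RCLike 𝕜] [Fintype ι]
    [DecidableEq ι] {l : ι → 𝕜} (hl : Function.Injective l) (B : Matrix ι ι 𝕜) :
    ∃ ν : 𝕜 → ι → 𝕜, ContDiffAt 𝕜 2 ν 0 ∧ ν 0 = l ∧
      (∀ᶠ t in 𝓝 0, (Matrix.diagonal l + t • B).charpoly = ∏ i, (X - C (ν t i))) ∧
      deriv ν 0 = (fun k => B k k) ∧
      deriv (deriv ν) 0 = fun k => 2 * ∑ m ∈ univ.erase k, B k m * B m k / (l k - l m) := by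
  obtain ⟨μ, hμ, hμl, hchar⟩ := exists_contDiffAt_eigenvalues (A := Matrix.of.symm (.diagonal l))
    hl (by simp [Matrix.charpoly_diagonal])
  set γ : 𝕜 → ι → ι → 𝕜 := fun t => Matrix.of.symm (.diagonal l) + t • Matrix.of.symm B
  have hγ : Tendsto γ (𝓝 0) (𝓝 (γ 0)) := (show Continuous γ by fun_prop).tendsto 0
  have hγ0 : γ 0 = Matrix.of.symm (.diagonal l) := by simp [γ]
  have hν : ContDiffAt 𝕜 2 (μ ∘ γ) 0 := (hγ0 ▸ hμ.of_le le_top).comp 0 (by fun_prop)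
  have hν0 : (μ ∘ γ) 0 = l := by simp [hγ0, hμl]
  have hcharν : ∀ᶠ t in 𝓝 0, (Matrix.diagonal l + t • B).charpoly = ∏ i, (X - C (μ (γ t) i)) :=
    hγ.eventually (hγ0 ▸ hchar)
  have hroot (k : ι) :
      ∀ᶠ t in 𝓝 0, (Matrix.diagonal l + t • B).charpoly.IsRoot (μ (γ t) k) :=
    hcharν.mono fun t ht => by
      rw [ht, IsRoot, eval_prod]
      exact prod_eq_zero (mem_univ k) (by simp)
  have hderivs (k : ι) := derivs_of_isRoot_charpoly_diagonal_add_smul hl B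
    (contDiffAt_pi.1 hν k) (congrFun hν0 k) (hroot k)
  refine ⟨μ ∘ γ, hν, hν0, hcharν, ?_, ?_⟩
  · rw [deriv_pi fun k => (contDiffAt_pi.1 hν k).differentiableAt two_ne_zero]
    exact funext fun k => (hderivs k).1
  · exact funext fun k => (deriv_deriv_pi_apply hν k).trans (hderivs k).2

section Coordinates

variable {𝕜 F : Type*} [NontriviallyNormedField 𝕜] [NormedAddCommGroup F] [NormedSpace 𝕜 F]
  {ι : Type*} [Fintype ι] [DecidableEq ι]

theorem ContinuousLinearMap.apply_eq_sum_single (T : (ι → 𝕜) →L[𝕜] F) (x : ι → 𝕜) :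
    T x = ∑ k, x k • T (Pi.single k 1) := by
  conv_lhs => rw [← univ_sum_single x]
  rw [map_sum]
  exact sum_congr rfl fun k _ => by rw [← map_smul, ← Pi.single_smul', smul_eq_mul, mul_one]

theorem ContinuousLinearMap.apply_apply_eq_sum_single (T : (ι → 𝕜) →L[𝕜] (ι → 𝕜) →L[𝕜] F)
    (x y : ι → 𝕜) :
    T x y = ∑ k, ∑ m, (x k * y m) • T (Pi.single k 1) (Pi.single m 1) := by
  simp [T.apply_eq_sum_single x, (T _).apply_eq_sum_single y, smul_sum, mul_smul]

theorem sum_divided_difference_mul_symm {K : Type*} [Field K] (l c : ι → K) (w : ι → ι → K)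
    (hw : ∀ k m, w m k = w k m) :
    ∑ k, ∑ m, (if k = m then 0 else (c k - c m) / (l k - l m) * w k m) =
      ∑ k, c k * (2 * ∑ m ∈ univ.erase k, w k m / (l k - l m)) := by
  set f : ι → ι → K := fun k m => if k = m then 0 else c k * w k m / (l k - l m)
  have hsplit : ∀ k m,
      (if k = m then 0 else (c k - c m) / (l k - l m) * w k m) = f k m + f m k := by
    intro k m
    by_cases h : k = m
    · simp [f, h]
    · simp only [f, if_neg h, if_neg (Ne.symm h), hw k m, show l m - l k = -(l k - l m) by ring,
        div_neg]
      ring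
  have hrow : ∀ k, ∑ m, f k m = c k * ∑ m ∈ univ.erase k, w k m / (l k - l m) := by
    intro k
    rw [← sum_erase (a := k) _ (by simp [f]), mul_sum]
    exact sum_congr rfl fun m hm => by simp [f, (ne_of_mem_erase hm).symm, mul_div_assoc]
  simp_rw [hsplit, sum_add_distrib]
  rw [sum_comm (f := fun k m => f m k), ← two_mul, sum_congr rfl fun k _ => hrow k, mul_sum]
  exact sum_congr rfl fun k _ => by ring

end Coordinates

theorem stmt_11_general (n : ℕ) (φ : (Fin n → ℝ) → ℝ)
    (hφ : ContDiff ℝ 2 φ)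
    (Φ : (Fin n → Fin n → ℝ) → ℝ)
    (heig : InducedByEigenvalues n φ Φ)
    (l : Fin n → ℝ) (hdist : Function.Injective l)
    (hΦ : ContDiffAt ℝ 2 Φ (Matrix.of.symm (Matrix.diagonal l))) :
    ∀ Zdot : Fin n → Fin n → ℝ, (Matrix.of Zdot).IsSymm →
      iteratedFDeriv ℝ 2 Φ (Matrix.of.symm (Matrix.diagonal l)) ![Zdot, Zdot] =
        (∑ k, ∑ m,
            iteratedFDeriv ℝ 2 φ l ![Pi.single k 1, Pi.single m 1] *
              Zdot k k * Zdot m m) +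
          ∑ k, ∑ m, if k = m then 0 else
            ((fderiv ℝ φ l (Pi.single k 1) - fderiv ℝ φ l (Pi.single m 1)) /
                (l k - l m)) * Zdot k m ^ 2 := by
  intro Z hZ
  obtain ⟨ν, hν, hν0, hchar, hν', hν''⟩ := exists_eigenvalues_diagonal_add_smul hdist (Matrix.of Z)
  have hΦν : (fun t : ℝ => Φ (Matrix.of.symm (.diagonal l) + t • Z)) =ᶠ[𝓝 0] φ ∘ ν :=
    hchar.mono fun t ht => heig _ _ ((Matrix.isSymm_diagonal l).add (hZ.smul t)) ht
  have hZZ : ∀ k m, Z k m * Z m k = Z k m ^ 2 := fun k m => by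
    rw [sq, show Z m k = Z k m from hZ.apply k m]
  calc iteratedFDeriv ℝ 2 Φ (Matrix.of.symm (.diagonal l)) ![Z, Z]
      _ = deriv (deriv (φ ∘ ν)) 0 :=
        (hΦ.iteratedFDeriv_two_eq_deriv_deriv Z).trans hΦν.deriv.deriv_eq
      _ = fderiv ℝ (fderiv ℝ φ) l (deriv ν 0) (deriv ν 0) + fderiv ℝ φ l (deriv (deriv ν) 0) := by
        rw [hφ.contDiffAt.deriv_deriv_comp hν, hν0]
      _ = _ := by
        rw [ContinuousLinearMap.apply_apply_eq_sum_single, ContinuousLinearMap.apply_eq_sum_single,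
          sum_divided_difference_mul_symm _ _ _ fun k m => by rw [← hZZ, ← hZZ, mul_comm]]
        simp only [hν', hν'', Matrix.of_apply, hZZ, iteratedFDeriv_two_apply, Matrix.cons_val_zero,
          Matrix.cons_val_one, Matrix.cons_val_fin_one, smul_eq_mul]
        congr 1
        · exact sum_congr rfl fun k _ => sum_congr rfl fun m _ => by ring
        · exact sum_congr rfl fun k _ => mul_comm _ _

theorem stmt_11 (n : ℕ) (φ : (Fin n → ℝ) → ℝ)
    (hφsym : ∀ (σ : Equiv.Perm (Fin n)) (x : Fin n → ℝ), φ (x ∘ σ) = φ x)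
    (hφ : ContDiff ℝ 2 φ)
    (Φ : (Fin n → Fin n → ℝ) → ℝ)
    (heig : InducedByEigenvalues n φ Φ)
    (l : Fin n → ℝ) (hdist : Function.Injective l)
    (hΦ : ContDiffAt ℝ 2 Φ (Matrix.of.symm (Matrix.diagonal l))) :
    ∀ Zdot : Fin n → Fin n → ℝ, (Matrix.of Zdot).IsSymm →
      iteratedFDeriv ℝ 2 Φ (Matrix.of.symm (Matrix.diagonal l)) ![Zdot, Zdot] =
        (∑ k, ∑ m,
            iteratedFDeriv ℝ 2 φ l ![Pi.single k 1, Pi.single m 1] *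
              Zdot k k * Zdot m m) +
          ∑ k, ∑ m, if k = m then 0 else
            ((fderiv ℝ φ l (Pi.single k 1) - fderiv ℝ φ l (Pi.single m 1)) /
                (l k - l m)) * Zdot k m ^ 2 :=
  stmt_11_general n φ hφ Φ heig l hdist hΦ
end

section
/- Let λ₁,…,λₙ be reals with λₖλₗ > −1 for all k ≠ l, and let Ż be any real symmetric n×n matrix. Then the quantity p̈ = Σₖ ((−1+λₖ²)/(1+λₖ²)²) Żₖₖ² + Σ_{k≠l} ((λₖλₗ − 1)/((1+λₖ²)(1+λₗ²))) Ż_{kl}² + Σ_{k,l} (−2λₖλₗ/((1+λₖ²)(1+λₗ²))) Ż_{kl}² satisfies p̈ = −Σₖ Żₖₖ²/(1+λₖ²) − Σ_{k≠l} ((λₖλₗ+1)/((1+λₖ²)(1+λₗ²))) Ż_{kl}² ≤ 0. -/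
/-! Split the last double sum into its diagonal and off-diagonal parts. The coefficient of `Ż_kk²`
then collapses to `-1 / (1 + λ_k²)` and that of `Ż_km²`, `k ≠ m`, to
`-(λ_k λ_m + 1) / ((1 + λ_k²)(1 + λ_m²))`, which is nonpositive because `λ_k λ_m > -1`. -/

open Finset

section

variable {ι : Type*} [Fintype ι] [DecidableEq ι]

theorem sum_sum_eq_sum_diag_add_sum_offDiag {M : Type*} [AddCommMonoid M] (f : ι → ι → M) :
    ∑ k, ∑ m, f k m = ∑ k, f k k + ∑ k, ∑ m, if k = m then 0 else f k m := by
  rw [← sum_add_distrib]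
  refine sum_congr rfl fun k _ => ?_
  rw [← Fintype.sum_ite_eq k (f k), ← sum_add_distrib]
  refine sum_congr rfl fun m _ => ?_
  split_ifs with h <;> simp [h]

noncomputable def secondVariation (l : ι → ℝ) (Z : Matrix ι ι ℝ) : ℝ :=
  ∑ k, ((-1 + l k ^ 2) / (1 + l k ^ 2) ^ 2) * Z k k ^ 2 +
    (∑ k, ∑ m, if k = m then 0 else
      ((l k * l m - 1) / ((1 + l k ^ 2) * (1 + l m ^ 2))) * Z k m ^ 2) +
    ∑ k, ∑ m, (-2 * l k * l m / ((1 + l k ^ 2) * (1 + l m ^ 2))) * Z k m ^ 2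

theorem secondVariation_eq (l : ι → ℝ) (Z : Matrix ι ι ℝ) :
    secondVariation l Z = -(∑ k, Z k k ^ 2 / (1 + l k ^ 2)) -
      ∑ k, ∑ m, if k = m then 0 else
        ((l k * l m + 1) / ((1 + l k ^ 2) * (1 + l m ^ 2))) * Z k m ^ 2 := by
  have hne : ∀ k, 1 + l k ^ 2 ≠ 0 := fun k => by positivity
  rw [secondVariation]
  conv_lhs => enter [2]; rw [sum_sum_eq_sum_diag_add_sum_offDiag]
  rw [sub_eq_add_neg, ← sum_neg_distrib, ← sum_neg_distrib, add_add_add_comm,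
    ← sum_add_distrib, ← sum_add_distrib]
  congr 1
  · refine sum_congr rfl fun k _ => ?_
    field_simp [hne k]
    ring
  · refine sum_congr rfl fun k _ => ?_
    rw [← sum_neg_distrib, ← sum_add_distrib]
    refine sum_congr rfl fun m _ => ?_
    split_ifs
    · simp
    · field_simp [hne k, hne m]
      ring

theorem secondVariation_nonpos {l : ι → ℝ} (hl : ∀ k m, k ≠ m → -1 < l k * l m)
    (Z : Matrix ι ι ℝ) : secondVariation l Z ≤ 0 := by
  rw [secondVariation_eq, neg_sub_left, neg_nonpos]
  refine add_nonneg (sum_nonneg fun k _ => sum_nonneg fun m _ => ?_)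
    (sum_nonneg fun k _ => by positivity)
  split_ifs with h
  · exact le_rfl
  · have : 0 < l k * l m + 1 := by linarith [hl k m h]
    positivity

end

theorem stmt_13_general (n : ℕ) (l : Fin n → ℝ)
    (hl : ∀ k m, k ≠ m → -1 < l k * l m)
    (Z : Matrix (Fin n) (Fin n) ℝ) :
    (∑ k, ((-1 + l k ^ 2) / (1 + l k ^ 2) ^ 2) * Z k k ^ 2 +
      (∑ k, ∑ m, if k = m then 0 else
        ((l k * l m - 1) / ((1 + l k ^ 2) * (1 + l m ^ 2))) * Z k m ^ 2) +
      ∑ k, ∑ m, (-2 * l k * l m / ((1 + l k ^ 2) * (1 + l m ^ 2))) * Z k m ^ 2 =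
      -(∑ k, Z k k ^ 2 / (1 + l k ^ 2)) -
        ∑ k, ∑ m, if k = m then 0 else
          ((l k * l m + 1) / ((1 + l k ^ 2) * (1 + l m ^ 2))) * Z k m ^ 2) ∧
    (∑ k, ((-1 + l k ^ 2) / (1 + l k ^ 2) ^ 2) * Z k k ^ 2 +
      (∑ k, ∑ m, if k = m then 0 else
        ((l k * l m - 1) / ((1 + l k ^ 2) * (1 + l m ^ 2))) * Z k m ^ 2) +
      ∑ k, ∑ m, (-2 * l k * l m / ((1 + l k ^ 2) * (1 + l m ^ 2))) * Z k m ^ 2 ≤ 0) :=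
  ⟨secondVariation_eq l Z, secondVariation_nonpos hl Z⟩

theorem stmt_13 (n : ℕ) (l : Fin n → ℝ)
    (hl : ∀ k m, k ≠ m → -1 < l k * l m)
    (Z : Matrix (Fin n) (Fin n) ℝ) (hZ : Z.IsSymm) :
    (∑ k, ((-1 + l k ^ 2) / (1 + l k ^ 2) ^ 2) * Z k k ^ 2 +
      (∑ k, ∑ m, if k = m then 0 else
        ((l k * l m - 1) / ((1 + l k ^ 2) * (1 + l m ^ 2))) * Z k m ^ 2) +
      ∑ k, ∑ m, (-2 * l k * l m / ((1 + l k ^ 2) * (1 + l m ^ 2))) * Z k m ^ 2 =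
      -(∑ k, Z k k ^ 2 / (1 + l k ^ 2)) -
        ∑ k, ∑ m, if k = m then 0 else
          ((l k * l m + 1) / ((1 + l k ^ 2) * (1 + l m ^ 2))) * Z k m ^ 2) ∧
    (∑ k, ((-1 + l k ^ 2) / (1 + l k ^ 2) ^ 2) * Z k k ^ 2 +
      (∑ k, ∑ m, if k = m then 0 else
        ((l k * l m - 1) / ((1 + l k ^ 2) * (1 + l m ^ 2))) * Z k m ^ 2) +
      ∑ k, ∑ m, (-2 * l k * l m / ((1 + l k ^ 2) * (1 + l m ^ 2))) * Z k m ^ 2 ≤ 0) :=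
  stmt_13_general n l hl Z
end

section
/- Let {eᵢ} be the orthonormal basis eᵢ = (aᵢ + λᵢJaᵢ)/√(1+λᵢ²) and U ∈ U(n) with Ueᵢ = Σₖ P_{ki} eₖ + Σₗ Q_{li} Jeₗ. Then S_U(eᵢ, eᵢ) = Σₖ (P_{ki}² − Q_{ki}²) λₖ/(1+λₖ²) + Σₖ P_{ki}Q_{ki} (1−λₖ²)/(1+λₖ²), where S(X,Y) = ⟨Jπ₁X, π₂Y⟩ and S_U(X,Y) = S(UX, UY). -/
/-- The model of `ℂⁿ ≅ ℝⁿ ⊕ ℝⁿ`. -/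
abbrev V (n : ℕ) := (Fin n → ℝ) × (Fin n → ℝ)

/-- The standard real inner product on `ℂⁿ ≅ ℝⁿ ⊕ ℝⁿ`. -/
noncomputable def ip {n : ℕ} (x y : V n) : ℝ :=
  ∑ i, x.1 i * y.1 i + ∑ i, x.2 i * y.2 i

/-- The complex structure `J`, mapping the first summand onto the second. -/
def Jc {n : ℕ} (x : V n) : V n := (-x.2, x.1)

/-- Projection onto the first summand `ℝⁿ`. -/
def pi1 {n : ℕ} (x : V n) : V n := (x.1, 0)

/-- Projection onto the second summand `J(ℝⁿ)`. -/
def pi2 {n : ℕ} (x : V n) : V n := (0, x.2)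

/-- The bilinear form `S(X,Y) = ⟨Jπ₁X, π₂Y⟩`. -/
noncomputable def Sb {n : ℕ} (x y : V n) : ℝ := ip (Jc (pi1 x)) (pi2 y)

/-- The standard symplectic form `ω(X,Y) = ⟨JX, Y⟩`. -/
noncomputable def symp {n : ℕ} (x y : V n) : ℝ := ip (Jc x) y

/-- The orthonormal basis `eᵢ = (aᵢ + λᵢ J aᵢ)/√(1+λᵢ²)` of the Lagrangian graph. -/
noncomputable def ebasis {n : ℕ} (a : Fin n → Fin n → ℝ) (l : Fin n → ℝ)
    (i : Fin n) : V n :=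
  (1 / Real.sqrt (1 + l i ^ 2)) • (((a i, 0) : V n) + l i • Jc ((a i, 0) : V n))

lemma Sb_eq {n : ℕ} (x y : V n) : Sb x y = ∑ j, x.1 j * y.2 j := by
  simp [Sb, ip, Jc, pi1, pi2]

lemma sum_ortho {n : ℕ} (a : Fin n → Fin n → ℝ)
    (hon : ∀ i j, ∑ k, a i k * a j k = if i = j then (1 : ℝ) else 0)
    (A B : Fin n → ℝ) :
    ∑ j, (∑ k, A k * a k j) * (∑ m, B m * a m j) = ∑ k, A k * B k := by
  have : ∀ j : Fin n, (∑ k, A k * a k j) * (∑ m, B m * a m j)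
      = ∑ k, ∑ m, A k * B m * (a k j * a m j) := by
    intro j
    rw [Finset.sum_mul_sum]
    exact Finset.sum_congr rfl fun k _ => Finset.sum_congr rfl fun m _ => by ring
  simp_rw [this]
  rw [Finset.sum_comm]
  have : ∀ k : Fin n, ∑ j, ∑ m, A k * B m * (a k j * a m j) = A k * B k := by
    intro k
    rw [Finset.sum_comm]
    have h2 : ∀ m : Fin n, ∑ j, A k * B m * (a k j * a m j)
        = A k * B m * (if k = m then (1:ℝ) else 0) := by
      intro m
      rw [← Finset.mul_sum, hon k m]
    simp_rw [h2]
    simp [Finset.sum_ite_eq]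
  simp_rw [this]

theorem stmt_17 (n : ℕ) (a : Fin n → Fin n → ℝ)
    (hon : ∀ i j, ∑ k, a i k * a j k = if i = j then (1 : ℝ) else 0)
    (l : Fin n → ℝ) (U : V n →ₗ[ℝ] V n) (P Q : Matrix (Fin n) (Fin n) ℝ)
    (hU : ∀ i, U (ebasis a l i) =
      ∑ k, P k i • ebasis a l k + ∑ m, Q m i • Jc (ebasis a l m)) :
    ∀ i, Sb (U (ebasis a l i)) (U (ebasis a l i)) =
      ∑ k, (P k i ^ 2 - Q k i ^ 2) * (l k / (1 + l k ^ 2)) +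
        ∑ k, P k i * Q k i * ((1 - l k ^ 2) / (1 + l k ^ 2)) := by
  intro i
  have hpos : ∀ k, (0:ℝ) < 1 + l k ^ 2 := fun k => by positivity
  set c : Fin n → ℝ := fun k => 1 / Real.sqrt (1 + l k ^ 2) with hc
  have hc2 : ∀ k, c k * c k = 1 / (1 + l k ^ 2) := by
    intro k
    rw [hc]
    simp only
    rw [div_mul_div_comm, one_mul, Real.mul_self_sqrt (hpos k).le]
  rw [hU i, Sb_eq]
  set x := ∑ k, P k i • ebasis a l k + ∑ m, Q m i • Jc (ebasis a l m) with hx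
  have h1 : ∀ j, x.1 j = ∑ k, (c k * (P k i - l k * Q k i)) * a k j := by
    intro j
    simp only [hx, ebasis, Jc, Prod.fst_add, Prod.fst_sum, Prod.smul_fst,
      Prod.snd_add, Prod.snd_sum, Prod.smul_snd, smul_add, Prod.smul_fst]
    rw [← Finset.sum_add_distrib]
    simp only [Finset.sum_apply, Pi.add_apply, Pi.smul_apply, Pi.neg_apply,
      Pi.zero_apply, smul_eq_mul]
    exact Finset.sum_congr rfl fun k _ => by ring
  have h2 : ∀ j, x.2 j = ∑ k, (c k * (l k * P k i + Q k i)) * a k j := by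
    intro j
    simp only [hx, ebasis, Jc, Prod.fst_add, Prod.fst_sum, Prod.smul_fst,
      Prod.snd_add, Prod.snd_sum, Prod.smul_snd, smul_add]
    rw [← Finset.sum_add_distrib]
    simp only [Finset.sum_apply, Pi.add_apply, Pi.smul_apply, Pi.neg_apply,
      Pi.zero_apply, smul_eq_mul]
    exact Finset.sum_congr rfl fun k _ => by ring
  simp_rw [h1, h2]
  rw [sum_ortho a hon, ← Finset.sum_add_distrib]
  refine Finset.sum_congr rfl fun k _ => ?_
  have hne := (hpos k).ne'
  have hfac : c k * (P k i - l k * Q k i) * (c k * (l k * P k i + Q k i))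
      = (c k * c k) * ((P k i - l k * Q k i) * (l k * P k i + Q k i)) := by ring
  rw [hfac, hc2 k]
  field_simp
  ring
end
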